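/- For ν > −1/2, the Bessel-Struve kernel B_ν satisfies the non-homogeneous differential equation z² B_ν''(z) + (2ν+1) z B_ν'(z) − z² B_ν(z) = z · M for all z in the unit disk, where M = 2Γ(ν+1)/(√π Γ(ν+1/2)). -/

import Mathlib

/-- The Bessel-Struve kernel function. -/
noncomputable def besselStruve (ν : ℝ) (z : ℂ) : ℂ :=
  ∑' n : ℕ, ((Real.Gamma (ν + 1) * Real.Gamma (((n : ℝ) + 1) / 2) /
    (Real.sqrt Real.pi * (n.factorial : ℝ) * Real.Gamma ((n : ℝ) / 2 + ν + 1)) : ℝ) : ℂ) * z ^ n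

/-!
The Taylor coefficients `c n` of `B_ν` satisfy `c n = (n + 2) (n + 2 + 2ν) c (n + 2)` by
`Γ(s + 1) = s Γ(s)`. Hence they decay geometrically, the series may be differentiated termwise on
the unit disk, and the recurrence turns `z² (B'' - B)` into `-(2ν + 1) z (B' - c 1)`; what remains
of the left-hand side is `(2ν + 1) c 1 z = M z`.
-/

section PowerSeries

variable {𝕜 : Type*} [RCLike 𝕜]

def derivCoeff (a : ℕ → 𝕜) (n : ℕ) : 𝕜 := (n + 1) * a (n + 1)

theorem summable_pow_mul_norm_derivCoeff {a : ℕ → 𝕜}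
    (ha : ∀ k : ℕ, Summable fun n : ℕ ↦ (n : ℝ) ^ k * ‖a n‖) (k : ℕ) :
    Summable fun n : ℕ ↦ (n : ℝ) ^ k * ‖derivCoeff a n‖ := by
  have hshift : Summable fun n : ℕ ↦ ((n : ℝ) + 1) ^ (k + 1) * ‖a (n + 1)‖ := by
    simpa using (summable_nat_add_iff 1).mpr (ha (k + 1))
  refine hshift.of_nonneg_of_le (fun n ↦ by positivity) fun n ↦ ?_
  have hn : (n : ℝ) ^ k ≤ ((n : ℝ) + 1) ^ k := by gcongr; linarith
  calc (n : ℝ) ^ k * ‖derivCoeff a n‖ = (n : ℝ) ^ k * ((n + 1) * ‖a (n + 1)‖) := by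
        rw [derivCoeff, norm_mul]; norm_cast
    _ ≤ ((n : ℝ) + 1) ^ k * ((n + 1) * ‖a (n + 1)‖) := by gcongr
    _ = ((n : ℝ) + 1) ^ (k + 1) * ‖a (n + 1)‖ := by ring

theorem summable_mul_pow_of_summable_norm {a : ℕ → 𝕜} (ha : Summable fun n : ℕ ↦ ‖a n‖) {w : 𝕜}
    (hw : ‖w‖ ≤ 1) : Summable fun n : ℕ ↦ a n * w ^ n :=
  ha.of_norm_bounded fun n ↦ by
    rw [norm_mul, norm_pow]
    exact mul_le_of_le_one_right (norm_nonneg _) (pow_le_one₀ (norm_nonneg w) hw)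

theorem hasDerivAt_tsum_mul_pow {a : ℕ → 𝕜} (ha : Summable fun n : ℕ ↦ (n : ℝ) * ‖a n‖) {z : 𝕜}
    (hz : ‖z‖ < 1) :
    HasDerivAt (fun w ↦ ∑' n, a n * w ^ n) (∑' n, derivCoeff a n * z ^ n) z := by
  have hterm : ∀ (n : ℕ) (w : 𝕜), HasDerivAt (fun w ↦ a n * w ^ n) (n * a n * w ^ (n - 1)) w :=
    fun n w ↦ by
      simpa [mul_comm, mul_assoc, mul_left_comm] using (hasDerivAt_pow n w).const_mul (a n)
  have hbound : ∀ (n : ℕ) (w : 𝕜), w ∈ Metric.ball 0 1 →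
      ‖(n : 𝕜) * a n * w ^ (n - 1)‖ ≤ n * ‖a n‖ := by
    intro n w hw
    rw [mem_ball_zero_iff] at hw
    rw [norm_mul, norm_mul, norm_pow, RCLike.norm_natCast]
    exact mul_le_of_le_one_right (by positivity) (pow_le_one₀ (norm_nonneg w) hw.le)
  have hderiv := hasDerivAt_tsum_of_isPreconnected ha Metric.isOpen_ball
    (convex_ball (0 : 𝕜) 1).isPreconnected (fun n w _ ↦ hterm n w) hbound
    (Metric.mem_ball_self one_pos)
    (hasSum_single 0 fun n hn ↦ by simp [zero_pow hn]).summable (mem_ball_zero_iff.mpr hz)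
  have hsum : Summable fun n : ℕ ↦ (n : 𝕜) * a n * z ^ (n - 1) :=
    ha.of_norm_bounded fun n ↦ hbound n z (mem_ball_zero_iff.mpr hz)
  refine hderiv.congr_deriv ?_
  rw [hsum.tsum_eq_zero_add]
  simp [derivCoeff]

theorem deriv_tsum_mul_pow_eqOn {a : ℕ → 𝕜} (ha : Summable fun n : ℕ ↦ (n : ℝ) * ‖a n‖) :
    Set.EqOn (deriv fun w ↦ ∑' n, a n * w ^ n) (fun w ↦ ∑' n, derivCoeff a n * w ^ n)
      (Metric.ball 0 1) :=
  fun _ hw ↦ (hasDerivAt_tsum_mul_pow ha (mem_ball_zero_iff.mp hw)).deriv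

theorem tsum_mul_pow_ode {a : ℕ → 𝕜} (μ : 𝕜)
    (ha : ∀ k : ℕ, Summable fun n : ℕ ↦ (n : ℝ) ^ k * ‖a n‖)
    (hrec : ∀ n : ℕ, a n = (n + 2) * (n + 1 + μ) * a (n + 2)) {z : 𝕜} (hz : ‖z‖ < 1) :
    z ^ 2 * deriv (deriv fun w ↦ ∑' n, a n * w ^ n) z
      + μ * z * deriv (fun w ↦ ∑' n, a n * w ^ n) z - z ^ 2 * ∑' n, a n * z ^ n = μ * a 1 * z := by
  have ha' := summable_pow_mul_norm_derivCoeff ha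
  have ha'' := summable_pow_mul_norm_derivCoeff ha'
  have hsum : ∀ b : ℕ → 𝕜, (∀ k : ℕ, Summable fun n : ℕ ↦ (n : ℝ) ^ k * ‖b n‖) →
      Summable fun n ↦ b n * z ^ n :=
    fun b hb ↦ summable_mul_pow_of_summable_norm (by simpa using hb 0) hz.le
  have hd1 : deriv (fun w ↦ ∑' n, a n * w ^ n) z = ∑' n, derivCoeff a n * z ^ n :=
    (hasDerivAt_tsum_mul_pow (by simpa using ha 1) hz).deriv
  have hd2 : deriv (deriv fun w ↦ ∑' n, a n * w ^ n) z
      = ∑' n, derivCoeff (derivCoeff a) n * z ^ n := by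
    rw [((deriv_tsum_mul_pow_eqOn (by simpa using ha 1)).eventuallyEq_of_mem
      (Metric.isOpen_ball.mem_nhds (mem_ball_zero_iff.mpr hz))).deriv_eq]
    exact (hasDerivAt_tsum_mul_pow (by simpa using ha' 1) hz).deriv
  set S := ∑' n, derivCoeff a (n + 1) * z ^ n
  have h1 : deriv (fun w ↦ ∑' n, a n * w ^ n) z = a 1 + z * S := by
    rw [hd1, (hsum _ ha').tsum_eq_zero_add, ← tsum_mul_left]
    congr 1
    · simp [derivCoeff]
    · exact tsum_congr fun n ↦ by ring
  have h2 : deriv (deriv fun w ↦ ∑' n, a n * w ^ n) z - ∑' n, a n * z ^ n = -μ * S := by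
    rw [hd2, ← (hsum _ ha'').tsum_sub (hsum _ ha), ← tsum_mul_left]
    congr 1
    ext n
    rw [hrec n]
    simp only [derivCoeff]
    push_cast
    ring
  linear_combination z ^ 2 * h2 + μ * z * h1

end PowerSeries

theorem le_mul_pow_of_le_sq_mul {u : ℕ → ℝ} {q : ℝ} (hq : 0 < q)
    (h : ∀ n, u (n + 2) ≤ q ^ 2 * u n) (n : ℕ) : u n ≤ max (u 0) (u 1 / q) * q ^ n := by
  induction n using Nat.twoStepInduction with
  | zero => simp
  | one =>
    calc u 1 = u 1 / q * q ^ 1 := by field_simp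
      _ ≤ max (u 0) (u 1 / q) * q ^ 1 := by gcongr; exact le_max_right _ _
  | more n ih _ =>
    calc u (n + 2) ≤ q ^ 2 * u n := h n
      _ ≤ q ^ 2 * (max (u 0) (u 1 / q) * q ^ n) := by gcongr
      _ = max (u 0) (u 1 / q) * q ^ (n + 2) := by ring

noncomputable def besselStruveCoeff (ν : ℝ) (n : ℕ) : ℝ :=
  Real.Gamma (ν + 1) * Real.Gamma (((n : ℝ) + 1) / 2) /
    (Real.sqrt Real.pi * (n.factorial : ℝ) * Real.Gamma ((n : ℝ) / 2 + ν + 1))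

theorem besselStruve_eq_tsum (ν : ℝ) :
    besselStruve ν = fun z ↦ ∑' n, (besselStruveCoeff ν n : ℂ) * z ^ n :=
  rfl

theorem besselStruveCoeff_eq_mul_coeff_add_two {ν : ℝ} (hν : -1 < ν) (n : ℕ) :
    besselStruveCoeff ν n = (n + 2) * (n + 2 + 2 * ν) * besselStruveCoeff ν (n + 2) := by
  have hs : 0 < (n : ℝ) / 2 + ν + 1 := by linarith [(by positivity : (0 : ℝ) ≤ n / 2)]
  have hΓ : Real.Gamma ((((n + 2 : ℕ) : ℝ) + 1) / 2)
      = ((n + 1) / 2) * Real.Gamma ((n + 1) / 2) := by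
    rw [← Real.Gamma_add_one (s := ((n : ℝ) + 1) / 2) (by positivity)]; push_cast; ring_nf
  have hΓν : Real.Gamma (((n + 2 : ℕ) : ℝ) / 2 + ν + 1)
      = ((n : ℝ) / 2 + ν + 1) * Real.Gamma ((n : ℝ) / 2 + ν + 1) := by
    rw [← Real.Gamma_add_one hs.ne']; push_cast; ring_nf
  unfold besselStruveCoeff
  rw [hΓ, hΓν, Nat.factorial_succ, Nat.factorial_succ, mul_div_assoc',
    div_eq_div_iff (by positivity) (by positivity)]
  push_cast
  ring

theorem two_mul_add_one_mul_besselStruveCoeff_one {ν : ℝ} (hν : -(1 / 2) < ν) :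
    (2 * ν + 1) * besselStruveCoeff ν 1
      = 2 * Real.Gamma (ν + 1) / (Real.sqrt Real.pi * Real.Gamma (ν + 1 / 2)) := by
  have hs : 0 < ν + 1 / 2 := by linarith
  have hΓ : Real.Gamma (((1 : ℕ) : ℝ) / 2 + ν + 1) = (ν + 1 / 2) * Real.Gamma (ν + 1 / 2) := by
    rw [← Real.Gamma_add_one hs.ne']; push_cast; ring_nf
  unfold besselStruveCoeff
  rw [hΓ, mul_div_assoc', div_eq_div_iff (by positivity) (by positivity)]
  norm_num
  ring

theorem abs_besselStruveCoeff_add_two_le {ν : ℝ} (hν : -(1 / 2) < ν) (n : ℕ) :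
    |besselStruveCoeff ν (n + 2)| ≤ (3 / 4) ^ 2 * |besselStruveCoeff ν n| := by
  have hfactor : 2 ≤ ((n : ℝ) + 2) * (n + 2 + 2 * ν) := by nlinarith [(n.cast_nonneg : (0 : ℝ) ≤ n)]
  rw [besselStruveCoeff_eq_mul_coeff_add_two (by linarith) n, abs_mul,
    abs_of_pos (by linarith : (0 : ℝ) < (n + 2) * (n + 2 + 2 * ν))]
  nlinarith [abs_nonneg (besselStruveCoeff ν (n + 2))]

theorem summable_pow_mul_abs_besselStruveCoeff {ν : ℝ} (hν : -(1 / 2) < ν) (k : ℕ) :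
    Summable fun n : ℕ ↦ (n : ℝ) ^ k * |besselStruveCoeff ν n| := by
  set C := max |besselStruveCoeff ν 0| (|besselStruveCoeff ν 1| / (3 / 4))
  refine ((summable_pow_mul_geometric_of_norm_lt_one k (by norm_num : ‖(3 / 4 : ℝ)‖ < 1)).mul_left
    C).of_nonneg_of_le (fun n ↦ by positivity) fun n ↦ ?_
  calc (n : ℝ) ^ k * |besselStruveCoeff ν n| ≤ n ^ k * (C * (3 / 4) ^ n) := by
        gcongr
        exact le_mul_pow_of_le_sq_mul (u := fun n ↦ |besselStruveCoeff ν n|) (by norm_num)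
          (abs_besselStruveCoeff_add_two_le hν) n
    _ = C * (n ^ k * (3 / 4) ^ n) := by ring

theorem besselStruve_ode (ν : ℝ) (hν : -(1/2) < ν) (z : ℂ) (hz : ‖z‖ < 1) :
    z ^ 2 * deriv (deriv (besselStruve ν)) z +
      (2 * (ν : ℂ) + 1) * z * deriv (besselStruve ν) z - z ^ 2 * besselStruve ν z =
      z * ((2 * Real.Gamma (ν + 1) / (Real.sqrt Real.pi * Real.Gamma (ν + 1/2)) : ℝ) : ℂ) := by
  have hode := tsum_mul_pow_ode (a := fun n ↦ (besselStruveCoeff ν n : ℂ)) (2 * ν + 1)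
    (fun k ↦ by simpa using summable_pow_mul_abs_besselStruveCoeff hν k)
    (fun n ↦ by
      rw [besselStruveCoeff_eq_mul_coeff_add_two (by linarith) n]
      push_cast
      ring)
    hz
  rw [besselStruve_eq_tsum, hode, ← two_mul_add_one_mul_besselStruveCoeff_one hν]
  push_cast
  ring
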